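/- arXiv:1610.01659 — 4 statements merged into one kernel-verified Lean document; each statement's English description precedes it below -/
import Mathlib

section
/- Let (A, σ) be a submultiplicative seminormed unital commutative ℝ-algebra, d ∈ ℕ, and M a 2d-power module of A (not necessarily Archimedean). Then the closure of M with respect to the σ-topology equals Pos(X_M ∩ sp(σ)), i.e. cl_σ(M) = {a ∈ A : â ≥ 0 on X_M ∩ sp(σ)}. -/
/-- The character space `X(A)` topologized by the weakest topology making all Gelfand
transforms continuous. -/
noncomputable instance charSpaceTopology (A : Type*) [CommRing A] [Algebra ℝ A] :
    TopologicalSpace (A →ₐ[ℝ] ℝ) :=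
  TopologicalSpace.induced (fun (α : A →ₐ[ℝ] ℝ) (a : A) => α a) Pi.topologicalSpace

/-- The locally convex topology on `A` induced by a single seminorm `σ`. -/
noncomputable def seminormTopology {A : Type*} [CommRing A] [Algebra ℝ A]
    (σ : Seminorm ℝ A) : TopologicalSpace A :=
  (SeminormFamily.moduleFilterBasis (fun _ : Unit => σ)).topology

/-- A `2d`-power module of `A`. -/
def IsPowerModule {A : Type*} [CommRing A] [Algebra ℝ A] (d : ℕ) (M : Set A) : Prop :=
  (1 : A) ∈ M ∧ (∀ x ∈ M, ∀ y ∈ M, x + y ∈ M) ∧ ∀ a : A, ∀ x ∈ M, a ^ (2 * d) * x ∈ M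

/-!
`Pos(X_M ∩ sp σ)` is closed, so it contains the closure of `M`. Conversely, if `a ∉ cl M`,
Hahn–Banach gives a continuous functional `L ≥ 0` on `M` with `L a < 0`. Submultiplicativity makes
`1 - x` a σ-limit of `2d`-th powers when `σ x` is small (by a contraction iteration), so
`(1 - x) M ⊆ cl M` near `0`; hence every positive continuous functional satisfies
`|L x| ≤ ε⁻¹ L(1) σ(x)`, and the normalized ones form a compact set of states. An extreme state `e`
minimizing at `a` is multiplicative: for small `q` with `q M ⊆ M`, the decomposition
`e = e (q ·) + e ((1 - q) ·)` into positive functionals forces `e (q ·) = e(q) e`; taking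
`q = c ^ 2d` and comparing coefficients of `t` in `e ((1 + t b) ^ 2d x)` gives
`e (b x) = e(b) e(x)`. So `e` is a σ-continuous character in `X_M` with `e(a) < 0`.
-/

open Filter Topology Set

namespace WithSeminorms

variable {E : Type*} [AddCommGroup E] [Module ℝ E] [TopologicalSpace E] {p : Seminorm ℝ E}

theorem tendsto_iff_seminorm_sub_tendsto_zero (hp : WithSeminorms fun _ : Unit => p)
    {ι : Type*} {l : Filter ι} {u : ι → E} {z : E} :
    Tendsto u l (𝓝 z) ↔ Tendsto (fun i => p (u i - z)) l (𝓝 0) := by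
  rw [hp.tendsto_nhds, Metric.tendsto_nhds]
  simp [abs_of_nonneg (apply_nonneg p _)]

theorem continuous_iff_exists_abs_le (hp : WithSeminorms fun _ : Unit => p) (f : E →ₗ[ℝ] ℝ) :
    Continuous f ↔ ∃ C, ∀ x, |f x| ≤ C * p x := by
  constructor
  · intro hf
    obtain ⟨s, C, -, hC⟩ :=
      Seminorm.bound_of_continuous hp ((normSeminorm ℝ ℝ).comp f) (continuous_norm.comp hf)
    have hs : s.sup (fun _ => p) ≤ p := Finset.sup_le fun _ _ => le_rfl
    exact ⟨C, fun x => (hC x).trans (mul_le_mul_of_nonneg_left (hs x) C.2)⟩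
  · rintro ⟨C, hC⟩
    refine hp.continuous_real_rng f ⟨{()}, ⟨max C 0, le_max_right _ _⟩, fun x => ?_⟩
    rw [Finset.sup_singleton]
    exact (le_abs_self _).trans <|
      (hC x).trans (mul_le_mul_of_nonneg_right (le_max_left _ _) (apply_nonneg _ _))

end WithSeminorms

theorem Seminorm.abs_le_div_mul_of_forall_le {E : Type*} [AddCommGroup E] [Module ℝ E]
    (p : Seminorm ℝ E) (f : E →ₗ[ℝ] ℝ) {C K ε : ℝ} (hε : 0 < ε)
    (hC : ∀ x, |f x| ≤ C * p x) (hK : ∀ x, p x ≤ ε → |f x| ≤ K) (x : E) :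
    |f x| ≤ K / ε * p x := by
  rcases (apply_nonneg p x).eq_or_lt with h | h
  · simpa [← h] using hC x
  have hx := hK ((ε / p x) • x) (by
    rw [map_smul_eq_mul, Real.norm_eq_abs, abs_of_pos (by positivity), div_mul_cancel₀ _ h.ne'])
  rw [map_smul, smul_eq_mul, abs_mul, abs_of_pos (by positivity), div_mul_eq_mul_div,
    div_le_iff₀ h] at hx
  rw [div_mul_eq_mul_div, le_div_iff₀ hε]
  linarith

section Submultiplicative

variable {A : Type*} [CommRing A] [Algebra ℝ A] {σ : Seminorm ℝ A}

theorem seminorm_one_sub_mul_one_sub_le (hσ : ∀ a b : A, σ (a * b) ≤ σ a * σ b) (u v : A) :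
    σ (1 - (1 - u) * (1 - v)) ≤ (1 + σ u) * (1 + σ v) - 1 := by
  calc σ (1 - (1 - u) * (1 - v)) = σ (u + v - u * v) := by ring_nf
    _ ≤ σ u + σ v + σ (u * v) := by
      grw [map_sub_le_add, map_add_le_add]
    _ ≤ (1 + σ u) * (1 + σ v) - 1 := by nlinarith [hσ u v]

theorem seminorm_one_sub_one_sub_pow_le (hσ : ∀ a b : A, σ (a * b) ≤ σ a * σ b) (y : A) (n : ℕ) :
    σ (1 - (1 - y) ^ n) ≤ (1 + σ y) ^ n - 1 := by
  induction n with
  | zero => simp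
  | succ n ih =>
    have h := seminorm_one_sub_mul_one_sub_le hσ (1 - (1 - y) ^ n) y
    rw [sub_sub_cancel, ← pow_succ] at h
    refine h.trans ?_
    rw [pow_succ]
    gcongr
    linarith [apply_nonneg σ y]

theorem seminorm_one_sub_pow_mul_pow_le (hσ : ∀ a b : A, σ (a * b) ≤ σ a * σ b) {r : ℝ}
    {y y' : A} (hy : σ y ≤ r) (hy' : σ y' ≤ r) (i j : ℕ) :
    σ (1 - (1 - y) ^ i * (1 - y') ^ j) ≤ (1 + r) ^ (i + j) - 1 := by
  have h := seminorm_one_sub_mul_one_sub_le hσ (1 - (1 - y) ^ i) (1 - (1 - y') ^ j)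
  rw [sub_sub_cancel, sub_sub_cancel] at h
  refine h.trans ?_
  have hpow : ∀ w : A, σ w ≤ r → ∀ k : ℕ, 1 + σ (1 - (1 - w) ^ k) ≤ (1 + r) ^ k := by
    intro w hw k
    have hw0 := apply_nonneg σ w
    linarith [seminorm_one_sub_one_sub_pow_le hσ w k,
      pow_le_pow_left₀ (by linarith) (by linarith : 1 + σ w ≤ 1 + r) k]
  rw [pow_add]
  have := mul_le_mul (hpow y hy i) (hpow y' hy' j)
    (by linarith [apply_nonneg σ (1 - (1 - y') ^ j)])
    (pow_nonneg (by linarith [apply_nonneg σ y]) _)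
  linarith

/-- The fixed points of `rootStep n x` are the `y` with `(1 - y) ^ n = 1 - x`. -/
noncomputable def rootStep (n : ℕ) (x y : A) : A := y + (n : ℝ)⁻¹ • ((1 - y) ^ n - (1 - x))

theorem rootStep_sub_rootStep {n : ℕ} (hn : n ≠ 0) (x y y' : A) :
    rootStep n x y - rootStep n x y' =
      (n : ℝ)⁻¹ •
        ((y - y') * ∑ i ∈ Finset.range n, (1 - (1 - y) ^ i * (1 - y') ^ (n - 1 - i))) := by
  have hgeom := geom_sum₂_mul (1 - y) (1 - y') n
  have hc : algebraMap ℝ A (n : ℝ)⁻¹ * n = 1 := by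
    rw [← map_natCast (algebraMap ℝ A), ← map_mul, inv_mul_cancel₀ (by exact_mod_cast hn), map_one]
  simp only [rootStep, Finset.sum_sub_distrib, Finset.sum_const, Finset.card_range,
    Algebra.smul_def]
  linear_combination (y' - y) * hc - algebraMap ℝ A (n : ℝ)⁻¹ * hgeom

theorem seminorm_rootStep_sub_le (hσ : ∀ a b : A, σ (a * b) ≤ σ a * σ b) {n : ℕ} (hn : n ≠ 0)
    {r : ℝ} (hr : (1 + r) ^ (n - 1) ≤ 3 / 2) (x : A) {y y' : A} (hy : σ y ≤ r) (hy' : σ y' ≤ r) :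
    σ (rootStep n x y - rootStep n x y') ≤ σ (y - y') / 2 := by
  have hterm : ∀ i ∈ Finset.range n, σ (1 - (1 - y) ^ i * (1 - y') ^ (n - 1 - i)) ≤ 1 / 2 := by
    intro i hi
    have := seminorm_one_sub_pow_mul_pow_le hσ hy hy' i (n - 1 - i)
    rw [Nat.add_sub_of_le (by simp at hi; omega)] at this
    linarith
  have hsum : σ (∑ i ∈ Finset.range n, (1 - (1 - y) ^ i * (1 - y') ^ (n - 1 - i))) ≤ n * (1 / 2) :=
    calc _ ≤ ∑ i ∈ Finset.range n, σ (1 - (1 - y) ^ i * (1 - y') ^ (n - 1 - i)) :=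
          Finset.le_sum_of_subadditive σ (map_zero σ).le (map_add_le_add σ) _ _
      _ ≤ n * (1 / 2) := by simpa using Finset.sum_le_sum hterm
  rw [rootStep_sub_rootStep hn, map_smul_eq_mul, norm_inv, Real.norm_natCast]
  have hn' : (0 : ℝ) < n := by positivity
  calc (n : ℝ)⁻¹ * σ ((y - y') * _) ≤ (n : ℝ)⁻¹ * (σ (y - y') * (n * (1 / 2))) := by
        gcongr
        exact (hσ _ _).trans (by gcongr)
    _ = σ (y - y') / 2 := by field_simp

theorem seminorm_rootStep_zero_le {n : ℕ} (hn : n ≠ 0) (x : A) : σ (rootStep n x 0) ≤ σ x := by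
  have h0 : rootStep n x 0 = (n : ℝ)⁻¹ • x := by simp [rootStep]
  rw [h0, map_smul_eq_mul, norm_inv, Real.norm_natCast]
  have : (1 : ℝ) ≤ n := by exact_mod_cast Nat.one_le_iff_ne_zero.mpr hn
  exact mul_le_of_le_one_left (apply_nonneg σ x) (inv_le_one_of_one_le₀ this)

theorem seminorm_rootStep_le (hσ : ∀ a b : A, σ (a * b) ≤ σ a * σ b) {n : ℕ} (hn : n ≠ 0)
    {r : ℝ} (hr : (1 + r) ^ (n - 1) ≤ 3 / 2) {x y : A} (hx : σ x ≤ r / 2) (hy : σ y ≤ r) :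
    σ (rootStep n x y) ≤ r := by
  have hr0 : 0 ≤ r := by linarith [apply_nonneg σ x]
  have h := seminorm_rootStep_sub_le hσ hn hr x hy (y' := 0) (by simpa using hr0)
  rw [sub_zero] at h
  calc σ (rootStep n x y) = σ ((rootStep n x y - rootStep n x 0) + rootStep n x 0) := by
        rw [sub_add_cancel]
    _ ≤ σ y / 2 + r / 2 :=
        (map_add_le_add _ _ _).trans (add_le_add h ((seminorm_rootStep_zero_le hn x).trans hx))
    _ ≤ r := by linarith

theorem tendsto_seminorm_pow_iterate_rootStep (hσ : ∀ a b : A, σ (a * b) ≤ σ a * σ b) {n : ℕ}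
    (hn : n ≠ 0) {r : ℝ} (hr : (1 + r) ^ (n - 1) ≤ 3 / 2) {x : A} (hx : σ x ≤ r / 2) :
    Tendsto (fun k => σ ((1 - (rootStep n x)^[k] 0) ^ n - (1 - x))) atTop (𝓝 0) := by
  set y : ℕ → A := fun k => (rootStep n x)^[k] 0
  have hy_succ : ∀ k, y (k + 1) = rootStep n x (y k) := fun k =>
    Function.iterate_succ_apply' _ _ _
  have hr0 : 0 ≤ r := by linarith [apply_nonneg σ x]
  have hy_le : ∀ k, σ (y k) ≤ r := by
    intro k
    induction k with
    | zero => simpa [y] using hr0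
    | succ k ih => rw [hy_succ]; exact seminorm_rootStep_le hσ hn hr hx ih
  have hstep : ∀ k, σ (y (k + 1) - y k) ≤ r / 2 * (1 / 2) ^ k := by
    intro k
    induction k with
    | zero => simpa [y] using (seminorm_rootStep_zero_le hn x).trans hx
    | succ k ih =>
      have h := seminorm_rootStep_sub_le hσ hn hr x (hy_le (k + 1)) (hy_le k)
      rw [← hy_succ, ← hy_succ] at h
      rw [pow_succ]
      linarith
  have hres : ∀ k, (1 - y k) ^ n - (1 - x) = (n : ℝ) • (y (k + 1) - y k) := by
    intro k
    rw [hy_succ, rootStep, add_sub_cancel_left, smul_inv_smul₀ (by exact_mod_cast hn)]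
  have hlim : Tendsto (fun k => n * (r / 2 * (1 / 2 : ℝ) ^ k)) atTop (𝓝 0) := by
    simpa using ((tendsto_pow_atTop_nhds_zero_of_lt_one (r := (1 / 2 : ℝ)) (by norm_num)
      (by norm_num)).const_mul (r / 2)).const_mul (n : ℝ)
  refine squeeze_zero (fun _ => apply_nonneg _ _) (fun k => ?_) hlim
  rw [hres, map_smul_eq_mul, Real.norm_natCast]
  gcongr
  exact hstep k

theorem exists_forall_exists_tendsto_seminorm_pow_sub (hσ : ∀ a b : A, σ (a * b) ≤ σ a * σ b)
    {n : ℕ} (hn : n ≠ 0) :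
    ∃ ε > 0, ∀ x : A, σ x ≤ ε →
      ∃ c : ℕ → A, Tendsto (fun k => σ (c k ^ n - (1 - x))) atTop (𝓝 0) := by
  have hcont : Continuous fun r : ℝ => (1 + r) ^ (n - 1) := by fun_prop
  have hev : ∀ᶠ r in 𝓝[>] (0 : ℝ), (1 + r) ^ (n - 1) < 3 / 2 :=
    nhdsWithin_le_nhds (hcont.continuousAt.eventually_lt continuousAt_const (by norm_num))
  obtain ⟨r, hr, hr0⟩ := (hev.and self_mem_nhdsWithin).exists
  exact ⟨r / 2, by simpa using hr0,
    fun x hx => ⟨_, tendsto_seminorm_pow_iterate_rootStep hσ hn hr.le hx⟩⟩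

end Submultiplicative

namespace IsPowerModule

variable {A : Type*} [CommRing A] [Algebra ℝ A] {d : ℕ} {M : Set A}

theorem one_mem (hM : IsPowerModule d M) : (1 : A) ∈ M := hM.1

theorem add_mem (hM : IsPowerModule d M) {x y : A} (hx : x ∈ M) (hy : y ∈ M) : x + y ∈ M :=
  hM.2.1 x hx y hy

theorem pow_mul_mem (hM : IsPowerModule d M) (a : A) {x : A} (hx : x ∈ M) :
    a ^ (2 * d) * x ∈ M :=
  hM.2.2 a x hx

theorem zero_mem (hM : IsPowerModule d M) (hd : 0 < d) : (0 : A) ∈ M := by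
  simpa [zero_pow (by omega : 2 * d ≠ 0)] using hM.pow_mul_mem 0 hM.one_mem

theorem smul_mem (hM : IsPowerModule d M) (hd : 0 < d) {t : ℝ} (ht : 0 ≤ t) {m : A}
    (hm : m ∈ M) : t • m ∈ M := by
  have hroot : (t ^ ((2 * d : ℕ) : ℝ)⁻¹) ^ (2 * d) = t :=
    Real.rpow_inv_natCast_pow ht (by omega)
  rw [← hroot, Algebra.smul_def, map_pow]
  exact hM.pow_mul_mem _ hm

theorem convex (hM : IsPowerModule d M) (hd : 0 < d) : Convex ℝ M :=
  fun _ hx _ hy _ _ ha hb _ => hM.add_mem (hM.smul_mem hd ha hx) (hM.smul_mem hd hb hy)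

end IsPowerModule

open Polynomial in
theorem LinearMap.eq_zero_of_forall_map_pow_eq_zero {𝕜 A : Type*} [Field 𝕜] [CharZero 𝕜]
    [CommRing A] [Algebra 𝕜 A] (φ : A →ₗ[𝕜] 𝕜) {n : ℕ} (hn : n ≠ 0)
    (h : ∀ c : A, φ (c ^ n) = 0) (b : A) : φ b = 0 := by
  set P : 𝕜[X] := ∑ j ∈ Finset.range (n + 1), monomial j (n.choose j * φ (b ^ j))
  have hP : P = 0 := Polynomial.funext fun t => by
    rw [eval_zero, ← h (t • b + 1), add_pow, map_sum, eval_finsetSum]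
    refine Finset.sum_congr rfl fun j _ => ?_
    rw [eval_monomial, one_pow, mul_one, _root_.smul_pow, smul_mul_assoc,
      mul_comm (b ^ j), ← map_natCast (algebraMap 𝕜 A), ← Algebra.smul_def, map_smul, map_smul,
      smul_eq_mul, smul_eq_mul]
    ring
  have := congrArg (coeff · 1) hP
  simp only [P, finsetSum_coeff, coeff_monomial, Finset.sum_ite_eq', Finset.mem_range,
    coeff_zero] at this
  rw [if_pos (by omega), pow_one, Nat.choose_one_right, mul_eq_zero, Nat.cast_eq_zero] at this
  exact this.resolve_left hn

section SeminormTopology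

variable {A : Type*} [CommRing A] [Algebra ℝ A] {σ : Seminorm ℝ A} [TopologicalSpace A]
  {d : ℕ} {M : Set A}

theorem continuous_const_mul_of_submultiplicative (hσ : ∀ a b : A, σ (a * b) ≤ σ a * σ b)
    (hp : WithSeminorms fun _ : Unit => σ) (q : A) : Continuous (q * ·) := by
  refine continuous_iff_continuousAt.2 fun x => ?_
  have hx := hp.tendsto_iff_seminorm_sub_tendsto_zero.1 (tendsto_id (x := 𝓝 x))
  rw [ContinuousAt, hp.tendsto_iff_seminorm_sub_tendsto_zero]
  refine squeeze_zero (fun _ => apply_nonneg _ _) (fun y => ?_)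
    (by simpa using hx.const_mul (σ q))
  rw [← mul_sub]
  exact hσ _ _

theorem IsPowerModule.exists_forall_one_sub_mul_mem_closure (hM : IsPowerModule d M)
    (hd : 0 < d) (hσ : ∀ a b : A, σ (a * b) ≤ σ a * σ b) (hp : WithSeminorms fun _ : Unit => σ) :
    ∃ ε > 0, ∀ x : A, σ x ≤ ε → ∀ m ∈ M, (1 - x) * m ∈ closure M := by
  obtain ⟨ε, hε, hroot⟩ :=
    exists_forall_exists_tendsto_seminorm_pow_sub hσ (n := 2 * d) (by omega)
  refine ⟨ε, hε, fun x hx m hm => ?_⟩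
  obtain ⟨c, hc⟩ := hroot x hx
  refine mem_closure_of_tendsto (f := fun k => c k ^ (2 * d) * m) (b := atTop) ?_
    (Eventually.of_forall fun k => hM.pow_mul_mem _ hm)
  rw [hp.tendsto_iff_seminorm_sub_tendsto_zero]
  refine squeeze_zero (fun _ => apply_nonneg _ _) (fun k => ?_)
    (by simpa using hc.mul_const (σ m))
  rw [← sub_mul]
  exact hσ _ _

theorem abs_apply_le_of_nonneg (hp : WithSeminorms fun _ : Unit => σ) {ε : ℝ} (hε : 0 < ε)
    (hball : ∀ x : A, σ x ≤ ε → 1 - x ∈ closure M) {f : A →ₗ[ℝ] ℝ} (hf : Continuous f)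
    (hfM : ∀ m ∈ M, 0 ≤ f m) (x : A) : |f x| ≤ ε⁻¹ * f 1 * σ x := by
  have hcl : ∀ z ∈ closure M, 0 ≤ f z := fun z hz =>
    closure_minimal hfM (isClosed_le continuous_const hf) hz
  obtain ⟨C, hC⟩ := (hp.continuous_iff_exists_abs_le f).1 hf
  have hK : ∀ x, σ x ≤ ε → |f x| ≤ f 1 := by
    intro x hx
    have h₁ := hcl _ (hball x hx)
    have h₂ := hcl _ (hball (-x) (by rwa [map_neg_eq_map]))
    rw [map_sub] at h₁
    rw [sub_neg_eq_add, map_add] at h₂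
    exact abs_le.2 ⟨by linarith, by linarith⟩
  simpa only [div_eq_inv_mul] using σ.abs_le_div_mul_of_forall_le f hε hC hK x

end SeminormTopology

theorem IsCompact.exists_mem_extremePoints_forall_le {E : Type*} [AddCommGroup E] [Module ℝ E]
    [TopologicalSpace E] [T2Space E] [IsTopologicalAddGroup E] [ContinuousSMul ℝ E]
    [LocallyConvexSpace ℝ E] {K : Set E} (hK : IsCompact K) (hne : K.Nonempty)
    (l : StrongDual ℝ E) : ∃ e ∈ K.extremePoints ℝ, ∀ f ∈ K, l e ≤ l f := by
  have hF : IsExposed ℝ K ((-l).toExposed K) := ContinuousLinearMap.toExposed.isExposed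
  obtain ⟨f₀, hf₀, hmin⟩ := hK.exists_isMinOn hne l.continuous.continuousOn
  obtain ⟨e, he⟩ := (hF.isCompact hK).extremePoints_nonempty
    ⟨f₀, hf₀, fun g hg => by simpa using hmin hg⟩
  exact ⟨e, hF.isExtreme.extremePoints_subset_extremePoints he,
    fun f hf => by simpa using he.1.2 f hf⟩

section StateSpace

variable {A : Type*} [CommRing A] [Algebra ℝ A] {σ : Seminorm ℝ A} {M : Set A} {C : ℝ}

def stateSpace (σ : Seminorm ℝ A) (M : Set A) (C : ℝ) : Set (A → ℝ) :=
  {f | IsLinearMap ℝ f ∧ f 1 = 1 ∧ (∀ m ∈ M, 0 ≤ f m) ∧ ∀ x, |f x| ≤ C * σ x}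

theorem isCompact_stateSpace (σ : Seminorm ℝ A) (M : Set A) (C : ℝ) :
    IsCompact (stateSpace σ M C) := by
  have hlin : {f : A → ℝ | IsLinearMap ℝ f} = range ((↑) : (A →ₗ[ℝ] ℝ) → A → ℝ) := by
    ext f
    exact ⟨fun h => ⟨h.mk' _, rfl⟩, fun ⟨g, hg⟩ => hg ▸ g.isLinear⟩
  have hclosed : IsClosed (stateSpace σ M C) := by
    simp only [stateSpace, ofPred_and, ofPred_forall, hlin]
    exact (LinearMap.isClosed_range_coe A ℝ (RingHom.id ℝ)).inter <|
      (isClosed_eq (continuous_apply 1) continuous_const).inter <|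
      (isClosed_iInter fun m => isClosed_iInter fun _ =>
        isClosed_le continuous_const (continuous_apply m)).inter <|
      isClosed_iInter fun x => isClosed_le (continuous_apply x).abs continuous_const
  exact (isCompact_univ_pi fun x => isCompact_Icc).of_isClosed_subset hclosed
    fun f hf => mem_univ_pi.2 fun x => abs_le.1 (hf.2.2.2 x)

theorem inv_apply_one_smul_mem_stateSpace {f : A →ₗ[ℝ] ℝ} (hfM : ∀ m ∈ M, 0 ≤ f m)
    (hf1 : 0 < f 1) (hf : ∀ x, |f x| ≤ C * f 1 * σ x) : (f 1)⁻¹ • ⇑f ∈ stateSpace σ M C := by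
  refine ⟨((f 1)⁻¹ • f).isLinear, inv_mul_cancel₀ hf1.ne',
    fun m hm => mul_nonneg (inv_nonneg.2 hf1.le) (hfM m hm), fun x => ?_⟩
  rw [Pi.smul_apply, smul_eq_mul, abs_mul, abs_of_pos (inv_pos.2 hf1), inv_mul_le_iff₀ hf1]
  linarith [hf x]

theorem eq_apply_one_smul_of_add_eq_mem_extremePoints (h1 : (1 : A) ∈ M) {e : A → ℝ}
    (he : e ∈ (stateSpace σ M C).extremePoints ℝ) {f g : A →ₗ[ℝ] ℝ}
    (hfM : ∀ m ∈ M, 0 ≤ f m) (hgM : ∀ m ∈ M, 0 ≤ g m)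
    (hf : ∀ x, |f x| ≤ C * f 1 * σ x) (hg : ∀ x, |g x| ≤ C * g 1 * σ x) (hfg : ⇑f + ⇑g = e) :
    ⇑f = f 1 • e := by
  have hsum : f 1 + g 1 = 1 := by rw [← he.1.2.1, ← hfg, Pi.add_apply]
  have vanish : ∀ h : A →ₗ[ℝ] ℝ, (∀ x, |h x| ≤ C * h 1 * σ x) → h 1 = 0 → ⇑h = 0 := by
    intro h hh h0
    ext x
    simpa [h0] using hh x
  rcases (hfM 1 h1).eq_or_lt with hf1 | hf1
  · rw [← hf1, zero_smul]
    exact vanish f hf hf1.symm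
  rcases (hgM 1 h1).eq_or_lt with hg1 | hg1
  · rw [← hfg, vanish g hg hg1.symm, add_zero, show f 1 = 1 by linarith, one_smul]
  have hseg : e ∈ openSegment ℝ ((f 1)⁻¹ • ⇑f) ((g 1)⁻¹ • ⇑g) :=
    ⟨f 1, g 1, hf1, hg1, hsum, by rw [smul_inv_smul₀ hf1.ne', smul_inv_smul₀ hg1.ne', hfg]⟩
  rw [← he.2 (inv_apply_one_smul_mem_stateSpace hfM hf1 hf)
    (inv_apply_one_smul_mem_stateSpace hgM hg1 hg) hseg, smul_inv_smul₀ hf1.ne']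

end StateSpace

section Characters

variable {A : Type*} [CommRing A] [Algebra ℝ A] {σ : Seminorm ℝ A} [TopologicalSpace A]
  {d : ℕ} {M : Set A}

theorem apply_mul_eq_mul_of_mem_extremePoints (hσ : ∀ a b : A, σ (a * b) ≤ σ a * σ b)
    (hp : WithSeminorms fun _ : Unit => σ) (h1 : (1 : A) ∈ M) {ε : ℝ} (hε : 0 < ε)
    (hball : ∀ x : A, σ x ≤ ε → ∀ m ∈ M, (1 - x) * m ∈ closure M) {e : A → ℝ}
    (he : e ∈ (stateSpace σ M ε⁻¹).extremePoints ℝ) {p : A} (hpM : ∀ m ∈ M, p * m ∈ M)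
    (z : A) : e (p * z) = e p * e z := by
  obtain ⟨he_lin, -, heM, he_le⟩ := he.1
  set E : A →ₗ[ℝ] ℝ := he_lin.mk' e
  have hE : Continuous E := (hp.continuous_iff_exists_abs_le E).2 ⟨_, he_le⟩
  have hball₁ : ∀ x : A, σ x ≤ ε → 1 - x ∈ closure M := fun x hx => by
    simpa using hball x hx 1 h1
  -- `q` is `p` scaled into the `ε`-ball, so that `(1 - q) * ·` is also positive on `M`.
  set s : ℝ := ε / (σ p + 1)
  have hs : 0 < s := by positivity
  set q : A := s • p
  have hq : σ q ≤ ε := by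
    rw [map_smul_eq_mul, Real.norm_of_nonneg hs.le, div_mul_eq_mul_div,
      div_le_iff₀ (by positivity)]
    nlinarith [apply_nonneg σ p]
  set f : A →ₗ[ℝ] ℝ := E ∘ₗ LinearMap.mulLeft ℝ q
  set g : A →ₗ[ℝ] ℝ := E ∘ₗ LinearMap.mulLeft ℝ (1 - q)
  have hfM : ∀ m ∈ M, 0 ≤ f m := fun m hm => by
    change 0 ≤ E (s • p * m)
    rw [smul_mul_assoc, map_smul, smul_eq_mul]
    exact mul_nonneg hs.le (heM _ (hpM m hm))
  have hgM : ∀ m ∈ M, 0 ≤ g m := fun m hm =>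
    closure_minimal heM (isClosed_le continuous_const hE) (hball q hq m hm)
  have hfg : ⇑f + ⇑g = e := by
    ext x
    change E (q * x) + E ((1 - q) * x) = E x
    rw [← map_add, ← add_mul, add_sub_cancel, one_mul]
  have hf := abs_apply_le_of_nonneg hp hε hball₁ (f := f)
    (hE.comp (continuous_const_mul_of_submultiplicative hσ hp q)) hfM
  have hg := abs_apply_le_of_nonneg hp hε hball₁ (f := g)
    (hE.comp (continuous_const_mul_of_submultiplicative hσ hp (1 - q))) hgM
  have key := congrFun (eq_apply_one_smul_of_add_eq_mem_extremePoints h1 he hfM hgM hf hg hfg) z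
  change E (s • p * z) = E (s • p * 1) * E z at key
  rw [mul_one, smul_mul_assoc, map_smul, map_smul, smul_eq_mul, smul_eq_mul, mul_assoc] at key
  exact mul_left_cancel₀ hs.ne' key

theorem IsPowerModule.exists_algHom_eq_of_mem_extremePoints (hM : IsPowerModule d M)
    (hd : 0 < d)
    (hσ : ∀ a b : A, σ (a * b) ≤ σ a * σ b) (hp : WithSeminorms fun _ : Unit => σ) {ε : ℝ}
    (hε : 0 < ε) (hball : ∀ x : A, σ x ≤ ε → ∀ m ∈ M, (1 - x) * m ∈ closure M) {e : A → ℝ}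
    (he : e ∈ (stateSpace σ M ε⁻¹).extremePoints ℝ) : ∃ α : A →ₐ[ℝ] ℝ, ⇑α = e := by
  obtain ⟨he_lin, he_one, -, -⟩ := he.1
  set E : A →ₗ[ℝ] ℝ := he_lin.mk' e
  have hpow : ∀ c x, E (c ^ (2 * d) * x) = E (c ^ (2 * d)) * E x := fun c =>
    apply_mul_eq_mul_of_mem_extremePoints hσ hp hM.one_mem hε hball he
      fun _ hm => hM.pow_mul_mem c hm
  have hmul : ∀ b x, E (b * x) = E b * E x := by
    intro b x
    have := (E ∘ₗ LinearMap.mulRight ℝ x - E x • E).eq_zero_of_forall_map_pow_eq_zero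
      (n := 2 * d) (by omega) (fun c => by simp [hpow, mul_comm (E x)]) b
    simpa [sub_eq_zero, mul_comm (E x)] using this
  exact ⟨AlgHom.ofLinearMap E he_one hmul, rfl⟩

theorem IsPowerModule.exists_continuousLinearMap_nonneg_neg [IsTopologicalAddGroup A]
    [ContinuousSMul ℝ A] [LocallyConvexSpace ℝ A] (hM : IsPowerModule d M) (hd : 0 < d) {a : A}
    (ha : a ∉ closure M) : ∃ L : A →L[ℝ] ℝ, (∀ m ∈ M, 0 ≤ L m) ∧ L a < 0 := by
  obtain ⟨f, u, hfu, hua⟩ :=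
    geometric_hahn_banach_closed_point (hM.convex hd).closure isClosed_closure ha
  have hu : 0 < u := by simpa using hfu 0 (subset_closure (hM.zero_mem hd))
  refine ⟨-f, fun m hm => ?_, by simp; linarith⟩
  by_contra! hneg
  rw [neg_apply, neg_neg_iff_pos] at hneg
  have := hfu _ (subset_closure (hM.smul_mem hd (div_pos hu hneg).le hm))
  rw [map_smul, smul_eq_mul, div_mul_cancel₀ _ hneg.ne'] at this
  exact lt_irrefl _ this

theorem IsPowerModule.exists_algHom_neg_of_notMem_closure (hM : IsPowerModule d M) (hd : 0 < d)
    (hσ : ∀ a b : A, σ (a * b) ≤ σ a * σ b) (hp : WithSeminorms fun _ : Unit => σ) {a : A}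
    (ha : a ∉ closure M) :
    ∃ α : A →ₐ[ℝ] ℝ, (∀ m ∈ M, 0 ≤ α m) ∧ Continuous α ∧ α a < 0 := by
  have := hp.topologicalAddGroup
  have := hp.continuousSMul
  have := hp.toLocallyConvexSpace
  obtain ⟨L, hLM, hLa⟩ := hM.exists_continuousLinearMap_nonneg_neg hd ha
  obtain ⟨ε, hε, hball⟩ := hM.exists_forall_one_sub_mul_mem_closure hd hσ hp
  have hL := abs_apply_le_of_nonneg hp hε (fun x hx => by simpa using hball x hx 1 hM.one_mem)
    L.continuous hLM
  have hL1 : 0 < L 1 := by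
    refine (hLM 1 hM.one_mem).lt_of_ne fun h => hLa.ne ?_
    simpa [← h] using hL a
  have hLs := inv_apply_one_smul_mem_stateSpace (f := L.toLinearMap) hLM hL1 hL
  obtain ⟨e, he, hmin⟩ := (isCompact_stateSpace σ M ε⁻¹).exists_mem_extremePoints_forall_le
    ⟨_, hLs⟩ (ContinuousLinearMap.proj a)
  obtain ⟨α, rfl⟩ := hM.exists_algHom_eq_of_mem_extremePoints hd hσ hp hε hball he
  obtain ⟨-, -, hαM, hα_le⟩ := he.1
  refine ⟨α, hαM, (hp.continuous_iff_exists_abs_le α.toLinearMap).2 ⟨_, hα_le⟩, ?_⟩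
  calc α a ≤ (L 1)⁻¹ * L a := hmin _ hLs
    _ < 0 := mul_neg_of_pos_of_neg (inv_pos.2 hL1) hLa

end Characters

/-- **Closure theorem for submultiplicative seminormed algebras.** For a submultiplicative
seminorm `σ` on `A` and a `2d`-power module `M` of `A` (not necessarily Archimedean), the
`σ`-closure of `M` equals `Pos(X_M ∩ sp(σ))`, the set of elements of `A` whose Gelfand
transform is non-negative on the `σ`-continuous characters which are non-negative on `M`. -/
theorem closure_powerModule_eq_pos (A : Type*) [CommRing A] [Algebra ℝ A]
    (σ : Seminorm ℝ A) (hσ : ∀ a b : A, σ (a * b) ≤ σ a * σ b)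
    (d : ℕ) (hd : 0 < d) (M : Set A) (hM : IsPowerModule d M) :
    @closure A (seminormTopology σ) M =
      {a : A | ∀ α : A →ₐ[ℝ] ℝ,
        (∀ m ∈ M, 0 ≤ α m) → @Continuous A ℝ (seminormTopology σ) inferInstance ⇑α →
          0 ≤ α a} := by
  let _ : TopologicalSpace A := seminormTopology σ
  have hp : WithSeminorms fun _ : Unit => σ := ⟨rfl⟩
  refine Subset.antisymm (closure_minimal (fun m hm α hαM _ => hαM m hm) ?_) fun a ha => ?_
  · simp only [ofPred_forall]
    exact isClosed_iInter fun α => isClosed_iInter fun _ => isClosed_iInter fun hα =>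
      isClosed_le continuous_const hα
  · by_contra ha'
    obtain ⟨α, hαM, hα, hαa⟩ := hM.exists_algHom_neg_of_notMem_closure hd hσ hp ha'
    exact (ha α hαM hα).not_gt hαa
end

section
/- Let (A, τ) be a unital commutative ℝ-algebra endowed with a locally multiplicatively convex topology τ and L : A → ℝ a τ-continuous linear functional. Then the following are equivalent: (1) L(Σ A²) ⊆ [0, +∞); (2) for all d ∈ ℕ, L(Σ A^{2d}) ⊆ [0, +∞); (3) there exists d ∈ ℕ with L(Σ A^{2d}) ⊆ [0, +∞). -/
/-- The locally convex topology on `A` generated by a family of seminorms. -/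
noncomputable def seminormFamilyTopology {A : Type*} [CommRing A] [Algebra ℝ A]
    {ι : Type*} [Nonempty ι] (p : ι → Seminorm ℝ A) : TopologicalSpace A :=
  (SeminormFamily.moduleFilterBasis (p : SeminormFamily ℝ A ι)).topology

/-- `Σ A^{2d}`: the set of all finite sums of `2d`-th powers of elements of `A`. -/
def sumPowers (A : Type*) [CommRing A] (d : ℕ) : Set A :=
  (AddSubmonoid.closure (Set.range fun a : A => a ^ (2 * d)) : AddSubmonoid A)

/-!
A continuous `L` is bounded by a multiple of one submultiplicative seminorm (a finite supremum
of the `p i`), so it suffices to show that in a seminormed commutative `ℝ`-algebra the closures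
of `Σ A^{2d}` and `Σ A²` coincide.

For `‖b‖ ≤ 1/4` the binomial estimate gives `1 + b = ½ (1 + b/d)^{2d} + ½ (1 + b')` with
again `‖b'‖ ≤ 1/4`; iterating, `1 + b` is an element of `Σ A^{2d}` plus `2^{-N} (1 + b_N)`, so it
lies in the closure `T` of `Σ A^{2d}`. Thus `T` is a closed subsemiring containing the
nonnegative reals and `1 ± t` for small `t`. Evaluating the Bernstein identity
`∑ (2ν - n)² B_{n,ν} = n(n-1)(2X-1)² + n` at `(1 + t)/2` puts `t² + 1/(n-1)` in `T`, and letting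
`n → ∞` gives `t² ∈ T`.
-/

open Filter Topology Polynomial

theorem bernsteinPolynomial.sum_two_mul_sub_sq_smul (R : Type*) [CommRing R] (n : ℕ) :
    ∑ ν ∈ Finset.range (n + 1), ((2 * ν - n : R) ^ 2) • bernsteinPolynomial R n ν =
      ((n * (n - 1) : R)) • (2 * X - 1) ^ 2 + (n : R[X]) := by
  have h₀ := bernsteinPolynomial.sum R n
  have h₁ := bernsteinPolynomial.sum_smul R n
  have h₂ := bernsteinPolynomial.sum_mul_smul R n
  have hcast : ∀ k : ℕ, ((k * (k - 1) : ℕ) : R) = k * (k - 1) := by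
    intro k; cases k <;> simp
  simp only [← Nat.cast_smul_eq_nsmul R, hcast] at h₁ h₂
  have expand : ∀ ν : ℕ, ((2 * ν - n : R) ^ 2) • bernsteinPolynomial R n ν =
      (4 : R) • ((ν * (ν - 1) : R) • bernsteinPolynomial R n ν) +
      (4 - 4 * n : R) • ((ν : R) • bernsteinPolynomial R n ν) +
      ((n : R) ^ 2) • bernsteinPolynomial R n ν := by
    intro ν
    rw [smul_smul, smul_smul, ← add_smul, ← add_smul]
    ring_nf
  simp only [expand, Finset.sum_add_distrib, ← Finset.smul_sum, h₀, h₁, h₂]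
  simp only [smul_eq_C_mul, map_mul, map_sub, map_pow, map_natCast, map_ofNat, map_one]
  ring

section SumPowers

variable {A : Type*} [CommRing A]

variable (A) in
/-- The carrier is definitionally `sumPowers A d`. -/
def sumPowersSubsemiring (d : ℕ) : Subsemiring A :=
  (MonoidHom.mrange (powMonoidHom (2 * d) : A →* A)).subsemiringClosure

theorem pow_mem_sumPowers (d : ℕ) (a : A) : a ^ (2 * d) ∈ sumPowers A d :=
  AddSubmonoid.subset_closure ⟨a, rfl⟩

theorem sumPowers_subset_of_dvd {d e : ℕ} (h : d ∣ e) : sumPowers A e ⊆ sumPowers A d := by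
  obtain ⟨k, rfl⟩ := h
  refine AddSubmonoid.closure_le.mpr ?_
  rintro _ ⟨a, rfl⟩
  show a ^ (2 * (d * k)) ∈ sumPowers A d
  rw [show 2 * (d * k) = k * (2 * d) by ring, pow_mul]
  exact pow_mem_sumPowers d (a ^ k)

variable [Algebra ℝ A]

theorem algebraMap_mem_sumPowers {d : ℕ} (hd : 0 < d) {r : ℝ} (hr : 0 ≤ r) :
    algebraMap ℝ A r ∈ sumPowers A d := by
  have hroot : (r ^ ((2 * d : ℕ) : ℝ)⁻¹) ^ (2 * d) = r :=
    Real.rpow_inv_natCast_pow hr (by omega)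
  simpa only [← map_pow, hroot] using
    pow_mem_sumPowers d (algebraMap ℝ A (r ^ ((2 * d : ℕ) : ℝ)⁻¹))

theorem smul_mem_sumPowers {d : ℕ} (hd : 0 < d) {r : ℝ} (hr : 0 ≤ r) {x : A}
    (hx : x ∈ sumPowers A d) : r • x ∈ sumPowers A d := by
  rw [Algebra.smul_def]
  exact (sumPowersSubsemiring A d).mul_mem (algebraMap_mem_sumPowers hd hr) hx

theorem mul_self_add_mem_of_one_add_mem_of_one_sub_mem (T : Subsemiring A)
    (hT : ∀ r : ℝ, 0 ≤ r → algebraMap ℝ A r ∈ T) {t : A} (hplus : 1 + t ∈ T)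
    (hminus : 1 - t ∈ T) (n : ℕ) : t * t + algebraMap ℝ A (n + 1)⁻¹ ∈ T := by
  set c : A := algebraMap ℝ A 2⁻¹ * (1 + t)
  have hc : c ∈ T := T.mul_mem (hT _ (by norm_num)) hplus
  have hc' : 1 - c ∈ T := by
    have : 1 - c = algebraMap ℝ A 2⁻¹ * (1 - t) := by
      simp only [c, ← Algebra.smul_def]; module
    exact this ▸ T.mul_mem (hT _ (by norm_num)) hminus
  set m : ℕ := n + 2
  have hE : (m * (m - 1) : ℝ) • t ^ 2 + (m : A) ∈ T := by
    have key := congrArg (aeval c) (bernsteinPolynomial.sum_two_mul_sub_sq_smul ℝ m)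
    simp only [map_sum, map_smul, map_add, map_pow, map_sub, map_mul, map_natCast, aeval_X,
      map_ofNat, map_one] at key
    have h2c : 2 * c - 1 = t := by
      rw [← mul_assoc, ← map_ofNat (algebraMap ℝ A) 2, ← map_mul]; norm_num
    rw [h2c] at key
    rw [← key]
    refine T.sum_mem fun ν _ => ?_
    rw [Algebra.smul_def]
    refine T.mul_mem (hT _ (sq_nonneg _)) ?_
    simp only [bernsteinPolynomial, map_mul, map_pow, map_sub, map_one, map_natCast, aeval_X]
    exact T.mul_mem (T.mul_mem (natCast_mem T _) (T.pow_mem hc _)) (T.pow_mem hc' _)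
  have hm : (0 : ℝ) < m * (m - 1) := by simp only [m]; push_cast; nlinarith
  convert T.mul_mem (hT (m * (m - 1) : ℝ)⁻¹ (inv_pos.mpr hm).le) hE using 1
  rw [← Algebra.smul_def, smul_add, smul_smul, inv_mul_cancel₀ hm.ne', one_smul, sq,
    ← map_natCast (algebraMap ℝ A), Algebra.smul_def, ← map_mul]
  congr 2
  have hm1 : (m : ℝ) - 1 = n + 1 := by simp only [m]; push_cast; ring
  rw [hm1, mul_inv_rev, inv_mul_cancel_right₀ (Nat.cast_ne_zero.mpr (by omega))]

end SumPowers

theorem one_add_pow_sub_le_sq {t : ℝ} (ht : 0 ≤ t) {n : ℕ} (hnt : n * t ≤ 1) :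
    (1 + t) ^ n - 1 - n * t ≤ (n * t) ^ 2 := by
  have hexp : (1 + t) ^ n ≤ Real.exp (n * t) := by
    rw [Real.exp_nat_mul]
    gcongr
    linarith [Real.add_one_le_exp t]
  have hnt0 : 0 ≤ n * t := by positivity
  have := abs_le.mp (Real.abs_exp_sub_one_sub_id_le (x := n * t) (by rwa [abs_of_nonneg hnt0]))
  linarith [this.2]

theorem norm_one_add_pow_sub_le {R : Type*} [SeminormedRing R] (x : R) (n : ℕ) :
    ‖(1 + x) ^ n - 1 - n • x‖ ≤ (1 + ‖x‖) ^ n - 1 - n * ‖x‖ := by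
  induction n with
  | zero => simp
  | succ n ih =>
    set z := (1 + x) ^ n - 1 - n • x
    have hz : (1 + x) ^ (n + 1) - 1 - (n + 1) • x = z + x * z + n • (x * x) := by
      simp only [z, pow_succ', mul_sub, mul_one, add_mul, one_mul, mul_smul_comm, add_smul,
        one_smul]
      abel
    calc ‖(1 + x) ^ (n + 1) - 1 - (n + 1) • x‖
        ≤ ‖z‖ + ‖x‖ * ‖z‖ + n * (‖x‖ * ‖x‖) := by
          rw [hz]
          refine norm_add₃_le.trans (add_le_add (add_le_add le_rfl (norm_mul_le _ _)) ?_)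
          exact norm_nsmul_le.trans (by gcongr; exact norm_mul_le _ _)
      _ ≤ (1 + ‖x‖) * ((1 + ‖x‖) ^ n - 1 - n * ‖x‖) + n * (‖x‖ * ‖x‖) := by
          nlinarith [norm_nonneg x]
      _ = (1 + ‖x‖) ^ (n + 1) - 1 - (n + 1 : ℕ) * ‖x‖ := by push_cast; ring

theorem exists_one_add_eq_inv_two_smul_pow_add {A : Type*} [SeminormedRing A]
    [NormedAlgebra ℝ A] {K : ℕ} (hK : K ≠ 0) {b : A} (hb : ‖b‖ ≤ 1 / 4) :
    ∃ b' : A, ‖b'‖ ≤ 1 / 4 ∧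
      1 + b = (2⁻¹ : ℝ) • ((1 + (2 / K : ℝ) • b) ^ K + (1 + b')) := by
  set x : A := (2 / K : ℝ) • b
  have hKx : K • x = (2 : ℝ) • b := by
    rw [← Nat.cast_smul_eq_nsmul ℝ, smul_smul, mul_div_cancel₀ _ (Nat.cast_ne_zero.mpr hK)]
  have hnorm : K * ‖x‖ = 2 * ‖b‖ := by
    rw [norm_smul, Real.norm_of_nonneg (by positivity)]
    field_simp
  refine ⟨-((1 + x) ^ K - 1 - K • x), ?_, ?_⟩
  · rw [norm_neg]
    calc ‖(1 + x) ^ K - 1 - K • x‖ ≤ (1 + ‖x‖) ^ K - 1 - K * ‖x‖ := norm_one_add_pow_sub_le x K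
      _ ≤ (K * ‖x‖) ^ 2 := one_add_pow_sub_le_sq (norm_nonneg x) (by linarith)
      _ ≤ 1 / 4 := by rw [hnorm]; nlinarith [norm_nonneg b]
  · rw [hKx]
    module

section Seminormed

variable {A : Type*} [SeminormedCommRing A] [NormedAlgebra ℝ A]

theorem exists_mem_sumPowers_eq_add_smul {d : ℕ} (hd : 0 < d) (N : ℕ) {b : A}
    (hb : ‖b‖ ≤ 1 / 4) :
    ∃ s ∈ sumPowers A d, ∃ b' : A, ‖b'‖ ≤ 1 / 4 ∧ 1 + b = s + (2⁻¹ : ℝ) ^ N • (1 + b') := by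
  induction N with
  | zero => exact ⟨0, (sumPowersSubsemiring A d).zero_mem, b, hb, by simp⟩
  | succ N ih =>
    obtain ⟨s, hs, b', hb', heq⟩ := ih
    obtain ⟨b'', hb'', hsplit⟩ :=
      exists_one_add_eq_inv_two_smul_pow_add (K := 2 * d) (by omega) hb'
    refine ⟨s + (2⁻¹ : ℝ) ^ (N + 1) • (1 + (2 / (2 * d : ℕ) : ℝ) • b') ^ (2 * d),
      (sumPowersSubsemiring A d).add_mem hs
        (smul_mem_sumPowers hd (by positivity) (pow_mem_sumPowers d _)), b'', hb'', ?_⟩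
    rw [heq, hsplit, pow_succ]
    module

theorem one_add_mem_closure_sumPowers {d : ℕ} (hd : 0 < d) {b : A} (hb : ‖b‖ ≤ 1 / 4) :
    1 + b ∈ closure (sumPowers A d) := by
  refine Metric.mem_closure_iff.mpr fun ε hε => ?_
  obtain ⟨N, hN⟩ := exists_pow_lt_of_lt_one
    (div_pos hε (by positivity : 0 < ‖(1 : A)‖ + 1 / 4)) (by norm_num : (2⁻¹ : ℝ) < 1)
  obtain ⟨s, hs, b', hb', heq⟩ := exists_mem_sumPowers_eq_add_smul hd N hb
  refine ⟨s, hs, ?_⟩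
  calc dist (1 + b) s = (2⁻¹ : ℝ) ^ N * ‖1 + b'‖ := by
        rw [dist_eq_norm, heq, add_sub_cancel_left, norm_smul,
          Real.norm_of_nonneg (by positivity)]
    _ ≤ (2⁻¹ : ℝ) ^ N * (‖(1 : A)‖ + 1 / 4) := by
        gcongr; exact (norm_add_le _ _).trans (by gcongr)
    _ < ε := (lt_div_iff₀ (by positivity)).mp hN

theorem mul_self_mem_closure_sumPowers {d : ℕ} (hd : 0 < d) (a : A) :
    a * a ∈ closure (sumPowers A d) := by
  set T := (sumPowersSubsemiring A d).topologicalClosure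
  have hT : (T : Set A) = closure (sumPowers A d) := Subsemiring.topologicalClosure_coe _
  rw [← hT]
  have halg : ∀ r : ℝ, 0 ≤ r → algebraMap ℝ A r ∈ T := fun r hr =>
    (sumPowersSubsemiring A d).le_topologicalClosure (algebraMap_mem_sumPowers hd hr)
  set s : ℝ := (4 * (‖a‖ + 1))⁻¹
  have hs : 0 < s := by positivity
  set t : A := s • a
  have ht : ‖t‖ ≤ 1 / 4 := by
    rw [norm_smul, Real.norm_of_nonneg hs.le, ← div_eq_inv_mul, div_le_iff₀ (by positivity)]
    nlinarith [norm_nonneg a]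
  have hplus : 1 + t ∈ T := by
    rw [← SetLike.mem_coe, hT]
    exact one_add_mem_closure_sumPowers hd ht
  have hminus : 1 - t ∈ T := by
    rw [← SetLike.mem_coe, hT, sub_eq_add_neg]
    exact one_add_mem_closure_sumPowers hd (by rwa [norm_neg])
  have htt : t * t ∈ T := by
    have h0 : Tendsto (fun n : ℕ => ((n : ℝ) + 1)⁻¹) atTop (𝓝 0) := by
      simpa using tendsto_one_div_add_atTop_nhds_zero_nat (𝕜 := ℝ)
    have hlim : Tendsto (fun n : ℕ => t * t + algebraMap ℝ A ((n : ℝ) + 1)⁻¹) atTop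
        (𝓝 (t * t)) := by
      simpa using tendsto_const_nhds.add (((continuous_algebraMap ℝ A).tendsto 0).comp h0)
    exact (sumPowersSubsemiring A d).isClosed_topologicalClosure.mem_of_tendsto hlim
      (Eventually.of_forall (mul_self_add_mem_of_one_add_mem_of_one_sub_mem T halg hplus hminus))
  have haa : a * a = algebraMap ℝ A (s⁻¹ * s⁻¹) * (t * t) := by
    rw [← Algebra.smul_def, smul_mul_smul_comm, smul_smul, mul_mul_mul_comm,
      inv_mul_cancel₀ hs.ne', one_mul, one_smul]
  rw [haa]
  exact T.mul_mem (halg _ (by positivity)) htt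

theorem closure_sumPowers_eq {d : ℕ} (hd : 0 < d) :
    closure (sumPowers A d) = closure (sumPowers A 1) := by
  refine (closure_mono (sumPowers_subset_of_dvd (one_dvd d))).antisymm ?_
  refine closure_minimal ?_ isClosed_closure
  refine (AddSubmonoid.closure_le
    (S := (sumPowersSubsemiring A d).topologicalClosure.toAddSubmonoid)).mpr ?_
  rintro _ ⟨a, rfl⟩
  show a ^ (2 * 1) ∈ closure (sumPowers A d)
  rw [mul_one, sq]
  exact mul_self_mem_closure_sumPowers hd a

end Seminormed

theorem Seminorm.finset_sup_apply_mul_le {𝕜 E ι : Type*} [SeminormedRing 𝕜] [Ring E]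
    [Module 𝕜 E] {p : ι → Seminorm 𝕜 E} (hp : ∀ i a b, p i (a * b) ≤ p i a * p i b)
    (s : Finset ι) (a b : E) : s.sup p (a * b) ≤ s.sup p a * s.sup p b :=
  Seminorm.finset_sup_apply_le (by positivity) fun i hi =>
    (hp i a b).trans (mul_le_mul (Seminorm.le_finset_sup_apply hi)
      (Seminorm.le_finset_sup_apply hi) (apply_nonneg _ _) (apply_nonneg _ _))

theorem nonneg_on_sumPowers_one_of_le_mul_seminorm {A : Type*} [CommRing A] [Algebra ℝ A]
    (σ : Seminorm ℝ A) (hσ : ∀ a b, σ (a * b) ≤ σ a * σ b) (L : A →ₗ[ℝ] ℝ) (C : ℝ)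
    (hLσ : ∀ x, ‖L x‖ ≤ C * σ x) {d : ℕ} (hd : 0 < d) (hL : ∀ x ∈ sumPowers A d, 0 ≤ L x) :
    ∀ x ∈ sumPowers A 1, 0 ≤ L x := by
  let _ : SeminormedCommRing A :=
    { (RingSeminorm.mk σ.toAddGroupSeminorm hσ).toSeminormedRing with mul_comm := mul_comm }
  let _ : NormedAlgebra ℝ A := { norm_smul_le := fun r x => (map_smul_eq_mul σ r x).le }
  have hcont : Continuous L := AddMonoidHomClass.continuous_of_bound L C hLσ
  have hclosure : closure (sumPowers A d) ⊆ {x | 0 ≤ L x} :=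
    closure_minimal hL (isClosed_le continuous_const hcont)
  intro x hx
  exact hclosure ((closure_sumPowers_eq (A := A) hd).symm ▸ subset_closure hx)

/-- **Equivalence of positivity on sums of even powers for continuous functionals.**
Let `τ` be a locally multiplicatively convex topology on `A` generated by a family of
submultiplicative seminorms and let `L : A → ℝ` be a `τ`-continuous linear functional.
Then the following are equivalent:
(1) `L(Σ A²) ⊆ [0, ∞)`;
(2) `L(Σ A^{2d}) ⊆ [0, ∞)` for all `d ∈ ℕ`, `d ≥ 1`;
(3) `L(Σ A^{2d}) ⊆ [0, ∞)` for some `d ∈ ℕ`, `d ≥ 1`. -/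
theorem positivity_even_powers_tfae (A : Type*) [CommRing A] [Algebra ℝ A]
    {ι : Type*} [Nonempty ι] (p : ι → Seminorm ℝ A)
    (hsub : ∀ i : ι, ∀ a b : A, p i (a * b) ≤ p i a * p i b)
    (L : A →ₗ[ℝ] ℝ)
    (hL : @Continuous A ℝ (seminormFamilyTopology p) inferInstance ⇑L) :
    List.TFAE
      [∀ a ∈ sumPowers A 1, 0 ≤ L a,
       ∀ d : ℕ, 0 < d → ∀ a ∈ sumPowers A d, 0 ≤ L a,
       ∃ d : ℕ, 0 < d ∧ ∀ a ∈ sumPowers A d, 0 ≤ L a] := by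
  tfae_have 1 → 2 := fun h d _ a ha => h a (sumPowers_subset_of_dvd (one_dvd d) ha)
  tfae_have 2 → 3 := fun h => ⟨1, one_pos, h 1 one_pos⟩
  tfae_have 3 → 1 := by
    rintro ⟨d, hd, hpos⟩
    let _ : TopologicalSpace A := seminormFamilyTopology p
    obtain ⟨s, C, -, hC⟩ := Seminorm.bound_of_continuous ⟨rfl⟩ ((normSeminorm ℝ ℝ).comp L)
      (continuous_norm.comp hL)
    exact nonneg_on_sumPowers_one_of_le_mul_seminorm (s.sup p)
      (Seminorm.finset_sup_apply_mul_le hsub s) L C (fun x => hC x) hd hpos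
  tfae_finish
end

section
/- Let d ≥ 1 and let L : ℝ[x₁, …, x_d] → ℝ be a linear functional that is continuous with respect to some locally multiplicatively convex topology on ℝ[x₁, …, x_d] (i.e., there exist a submultiplicative seminorm ρ on ℝ[x₁, …, x_d] and C > 0 such that |L(f)| ≤ C ρ(f) for all polynomials f). Then L satisfies Carleman's condition: for each j = 1, …, d, the series Σ_{n=1}^{∞} |L(x_j^{2n})|^{-1/(2n)} diverges to +∞ (with the convention that a term is +∞ when L(x_j^{2n}) = 0). -/
open MvPolynomial

/-- **Continuity w.r.t. an lmc topology implies Carleman's condition.** Let `d ≥ 1` and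
let `L : ℝ[x₁,…,x_d] → ℝ` be a linear functional dominated by a constant multiple of a
submultiplicative seminorm `ρ` (i.e. continuous w.r.t. some locally multiplicatively
convex topology). Then for each variable `x_j` the Carleman series
`Σ_{n≥1} |L(x_j^{2n})|^{-1/(2n)}` diverges to `+∞` (a term being `+∞` when
`L(x_j^{2n}) = 0`; in `ℝ≥0∞` this is built in since `0⁻¹ = ∞`). -/
theorem carleman_of_lmc_continuous (d : ℕ) (hd : 1 ≤ d)
    (L : MvPolynomial (Fin d) ℝ →ₗ[ℝ] ℝ)
    (hL : ∃ ρ : Seminorm ℝ (MvPolynomial (Fin d) ℝ),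
      (∀ f g : MvPolynomial (Fin d) ℝ, ρ (f * g) ≤ ρ f * ρ g) ∧
      ∃ C : ℝ, 0 < C ∧ ∀ f : MvPolynomial (Fin d) ℝ, |L f| ≤ C * ρ f) :
    ∀ j : Fin d,
      (∑' n : ℕ,
        ((ENNReal.ofReal |L (X j ^ (2 * (n + 1)))|) ^
          ((1 : ℝ) / (2 * (n + 1 : ℕ) : ℝ)))⁻¹) = ⊤ := by
  obtain ⟨ρ, hmul, C, hC, hdom⟩ := hL
  intro j
  set M : ℝ := max C 1 * max (ρ (X j)) 1 with hM
  have hM1 : 1 ≤ M := by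
    have := mul_le_mul (le_max_right C 1) (le_max_right (ρ (X j)) 1)
      zero_le_one (le_trans zero_le_one (le_max_right C 1))
    simpa using this
  have hMpos : 0 < M := lt_of_lt_of_le zero_lt_one hM1
  -- ρ (X j ^ k) ≤ ρ (X j) ^ k
  have hpow : ∀ k : ℕ, 1 ≤ k → ρ (X j ^ k) ≤ ρ (X j) ^ k := by
    intro k hk
    induction k with
    | zero => omega
    | succ n ih =>
      rcases Nat.eq_or_lt_of_le hk with h | h
      · simp [← h]
      · have hn : 1 ≤ n := by omega
        calc ρ (X j ^ (n + 1)) = ρ (X j ^ n * X j) := by ring_nf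
          _ ≤ ρ (X j ^ n) * ρ (X j) := hmul _ _
          _ ≤ ρ (X j) ^ n * ρ (X j) := by
              exact mul_le_mul_of_nonneg_right (ih hn) (apply_nonneg ρ _)
          _ = ρ (X j) ^ (n + 1) := by ring
  -- key bound: |L (X j ^ k)| ≤ M ^ k for 1 ≤ k
  have hbound : ∀ k : ℕ, 1 ≤ k → |L (X j ^ k)| ≤ M ^ k := by
    intro k hk
    have h1 : |L (X j ^ k)| ≤ C * ρ (X j) ^ k :=
      le_trans (hdom _) (mul_le_mul_of_nonneg_left (hpow k hk) hC.le)
    have h2 : C * ρ (X j) ^ k ≤ (max C 1) ^ k * (max (ρ (X j)) 1) ^ k := by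
      have hc1 : C ≤ (max C 1) ^ k := le_trans (le_max_left C 1)
        (le_self_pow₀ (le_max_right C 1) (by omega))
      have hr : ρ (X j) ^ k ≤ (max (ρ (X j)) 1) ^ k :=
        pow_le_pow_left₀ (apply_nonneg ρ _) (le_max_left _ _) k
      exact mul_le_mul hc1 hr (pow_nonneg (apply_nonneg ρ _) k)
        (pow_nonneg (le_trans zero_le_one (le_max_right C 1)) k)
    calc |L (X j ^ k)| ≤ (max C 1) ^ k * (max (ρ (X j)) 1) ^ k := le_trans h1 h2
      _ = M ^ k := by rw [hM, mul_pow]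
  -- each term of the series is ≥ (ofReal M)⁻¹
  have hterm : ∀ n : ℕ,
      (ENNReal.ofReal M)⁻¹ ≤
      ((ENNReal.ofReal |L (X j ^ (2 * (n + 1)))|) ^
        ((1 : ℝ) / (2 * (n + 1 : ℕ) : ℝ)))⁻¹ := by
    intro n
    apply ENNReal.inv_le_inv.2
    have hk1 : 1 ≤ 2 * (n + 1) := by omega
    set k : ℕ := 2 * (n + 1) with hk
    have hkpos : (0 : ℝ) < k := by positivity
    have hexp : (1 : ℝ) / (2 * (n + 1 : ℕ) : ℝ) = 1 / (k : ℝ) := by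
      rw [hk]; push_cast; ring
    have h1 : ENNReal.ofReal |L (X j ^ k)| ≤ (ENNReal.ofReal M) ^ k := by
      rw [← ENNReal.ofReal_pow hMpos.le]
      exact ENNReal.ofReal_le_ofReal (hbound k hk1)
    rw [hexp]
    calc (ENNReal.ofReal |L (X j ^ k)|) ^ ((1 : ℝ) / (k : ℝ))
        ≤ ((ENNReal.ofReal M) ^ k) ^ ((1 : ℝ) / (k : ℝ)) :=
          ENNReal.rpow_le_rpow h1 (by positivity)
      _ = (ENNReal.ofReal M) ^ ((k : ℝ) * ((1 : ℝ) / (k : ℝ))) := by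
          rw [← ENNReal.rpow_natCast (ENNReal.ofReal M) k, ← ENNReal.rpow_mul]
      _ = ENNReal.ofReal M := by
          rw [mul_one_div, div_self (ne_of_gt hkpos), ENNReal.rpow_one]
  -- conclude
  have hne : (ENNReal.ofReal M)⁻¹ ≠ 0 := by
    simp [ENNReal.inv_ne_zero]
  have : (⊤ : ENNReal) = ∑' _ : ℕ, (ENNReal.ofReal M)⁻¹ :=
    (ENNReal.tsum_const_eq_top_of_ne_zero hne).symm
  refine top_le_iff.1 ?_
  rw [this]
  exact ENNReal.tsum_le_tsum hterm
end

section
/- Let Ω be an index set, A = ℝ[x_i : i ∈ Ω] the polynomial ℝ-algebra, V ⊆ A the ℝ-linear span of the variables (the degree-one homogeneous polynomials), and ρ a seminorm on V. Then the projective extension ρ̄ of ρ to A is a submultiplicative seminorm on A: ρ̄ is a seminorm and ρ̄(f·g) ≤ ρ̄(f)·ρ̄(g) for all f, g ∈ A. Moreover ρ̄ restricted to V equals ρ. -/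
open MvPolynomial

/-- `V`: the `ℝ`-linear span of the variables (degree-one homogeneous polynomials) inside
the polynomial algebra `A = ℝ[x_i : i ∈ Ω]`. -/
noncomputable def Vars (Ω : Type*) : Submodule ℝ (MvPolynomial Ω ℝ) :=
  Submodule.span ℝ (Set.range (X : Ω → MvPolynomial Ω ℝ))

/-- `ρ̄_k(h)` for `k ≥ 1`: the infimum of `Σ_{i=1}^N ρ(f_{i1})⋯ρ(f_{ik})` over all
representations `h = Σ_{i=1}^N f_{i1}⋯f_{ik}` with `f_{ij} ∈ V`. -/
noncomputable def projExtHomog {Ω : Type*} (ρ : Seminorm ℝ ↥(Vars Ω)) (k : ℕ)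
    (h : MvPolynomial Ω ℝ) : ℝ :=
  sInf {r : ℝ | ∃ (N : ℕ) (f : Fin N → Fin k → ↥(Vars Ω)),
    h = ∑ i, ∏ j, ((f i j : MvPolynomial Ω ℝ)) ∧ r = ∑ i, ∏ j, ρ (f i j)}

/-- The projective extension `ρ̄` of a seminorm `ρ` on `V` to the polynomial algebra:
`ρ̄(h) = Σ_k ρ̄_k(h_k)` where `h_k` is the degree-`k` homogeneous component of `h` and
`ρ̄_0` is the absolute value on the constants. -/
noncomputable def projExt {Ω : Type*} (ρ : Seminorm ℝ ↥(Vars Ω))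
    (h : MvPolynomial Ω ℝ) : ℝ :=
  |MvPolynomial.coeff 0 h| +
    ∑ k ∈ Finset.Icc 1 h.totalDegree,
      projExtHomog ρ k (MvPolynomial.homogeneousComponent k h)

/-!
Write `Reps_k(h)` for the set of costs `Σ_i Π_j ρ(f_{ij})` of the representations of `h` as a sum
of products of `k` elements of `V`, so that `ρ̄_k(h) = inf Reps_k(h)`. Concatenating
representations gives `Reps_k(h₁) + Reps_k(h₂) ⊆ Reps_k(h₁ + h₂)`, multiplying them out gives
`Reps_k(h₁) · Reps_l(h₂) ⊆ Reps_{k+l}(h₁ h₂)`, and scaling the first factor of each product gives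
`Reps_k(c • h) = |c| • Reps_k(h)` for `c ≠ 0`, `k ≥ 1`. Every homogeneous polynomial of degree
`k ≥ 1` has a representation, so passing to infima makes `ρ̄_k` a seminorm on degree-`k`
polynomials with `ρ̄_{k+l}(h₁ h₂) ≤ ρ̄_k(h₁) ρ̄_l(h₂)`. Hence `ρ̄` is a seminorm, and
`ρ̄(fg) ≤ Σ_{k,l} ρ̄(f_k g_l) ≤ Σ_{k,l} ρ̄(f_k) ρ̄(g_l) = ρ̄(f) ρ̄(g)`. On `V`, the trivial
representation gives `ρ̄(v) ≤ ρ(v)` and the triangle inequality for `ρ` gives the converse.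
-/

open scoped Pointwise

lemma Real.le_mul_sInf {a c : ℝ} {t : Set ℝ} (ha : 0 ≤ a) (ht : t.Nonempty)
    (h : ∀ y ∈ t, c ≤ a * y) : c ≤ a * sInf t := by
  rw [← smul_eq_mul, ← Real.sInf_smul_of_nonneg ha]
  exact le_csInf (ht.smul_set) (Set.forall_mem_image.2 h)

lemma Real.le_sInf_mul_sInf {c : ℝ} {s t : Set ℝ} (hs : s.Nonempty) (ht : t.Nonempty)
    (hs₀ : ∀ x ∈ s, 0 ≤ x) (ht₀ : ∀ y ∈ t, 0 ≤ y) (h : ∀ x ∈ s, ∀ y ∈ t, c ≤ x * y) :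
    c ≤ sInf s * sInf t :=
  Real.le_mul_sInf (Real.sInf_nonneg hs₀) ht fun y hy => by
    rw [mul_comm]
    exact Real.le_mul_sInf (ht₀ y hy) hs fun x hx => mul_comm x y ▸ h x hx y hy

lemma X_mem_Vars {Ω : Type*} (i : Ω) : (X i : MvPolynomial Ω ℝ) ∈ Vars Ω :=
  Submodule.subset_span ⟨i, rfl⟩

section projExtReps

variable {Ω : Type*} (ρ : Seminorm ℝ ↥(Vars Ω))

def projExtReps (k : ℕ) (h : MvPolynomial Ω ℝ) : Set ℝ :=
  {r : ℝ | ∃ (N : ℕ) (f : Fin N → Fin k → ↥(Vars Ω)),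
    h = ∑ i, ∏ j, ((f i j : MvPolynomial Ω ℝ)) ∧ r = ∑ i, ∏ j, ρ (f i j)}

lemma projExtHomog_eq_sInf (k : ℕ) (h : MvPolynomial Ω ℝ) :
    projExtHomog ρ k h = sInf (projExtReps ρ k h) := rfl

variable {ρ}

lemma nonneg_of_mem_projExtReps {k : ℕ} {h : MvPolynomial Ω ℝ} {r : ℝ}
    (hr : r ∈ projExtReps ρ k h) : 0 ≤ r := by
  obtain ⟨N, f, -, rfl⟩ := hr
  exact Finset.sum_nonneg fun i _ => Finset.prod_nonneg fun j _ => apply_nonneg _ _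

lemma bddBelow_projExtReps (k : ℕ) (h : MvPolynomial Ω ℝ) : BddBelow (projExtReps ρ k h) :=
  ⟨0, fun _ => nonneg_of_mem_projExtReps⟩

lemma zero_mem_projExtReps (k : ℕ) : (0 : ℝ) ∈ projExtReps ρ k 0 :=
  ⟨0, Fin.elim0, by simp, by simp⟩

lemma add_mem_projExtReps {k : ℕ} {h₁ h₂ : MvPolynomial Ω ℝ} {r₁ r₂ : ℝ}
    (hr₁ : r₁ ∈ projExtReps ρ k h₁) (hr₂ : r₂ ∈ projExtReps ρ k h₂) :
    r₁ + r₂ ∈ projExtReps ρ k (h₁ + h₂) := by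
  obtain ⟨N₁, f, rfl, rfl⟩ := hr₁
  obtain ⟨N₂, g, rfl, rfl⟩ := hr₂
  exact ⟨N₁ + N₂, Fin.append f g, by simp [Fin.sum_univ_add], by simp [Fin.sum_univ_add]⟩

lemma mul_mem_projExtReps {k l : ℕ} {h₁ h₂ : MvPolynomial Ω ℝ} {r₁ r₂ : ℝ}
    (hr₁ : r₁ ∈ projExtReps ρ k h₁) (hr₂ : r₂ ∈ projExtReps ρ l h₂) :
    r₁ * r₂ ∈ projExtReps ρ (k + l) (h₁ * h₂) := by
  obtain ⟨N₁, f, rfl, rfl⟩ := hr₁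
  obtain ⟨N₂, g, rfl, rfl⟩ := hr₂
  refine ⟨N₁ * N₂, fun i => Fin.append (f (finProdFinEquiv.symm i).1)
    (g (finProdFinEquiv.symm i).2), ?_, ?_⟩ <;>
  · rw [Finset.sum_mul_sum, ← Equiv.sum_comp finProdFinEquiv, Fintype.sum_prod_type]
    simp [Fin.prod_univ_add]

lemma smul_mem_projExtReps {k : ℕ} {h : MvPolynomial Ω ℝ} {r : ℝ} (c : ℝ)
    (hr : r ∈ projExtReps ρ (k + 1) h) : |c| * r ∈ projExtReps ρ (k + 1) (c • h) := by
  obtain ⟨N, f, rfl, rfl⟩ := hr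
  refine ⟨N, fun i => Fin.cons (c • f i 0) (fun j => f i j.succ), ?_, ?_⟩
  · simp [Finset.smul_sum, Fin.prod_univ_succ]
  · simp [Finset.mul_sum, Fin.prod_univ_succ, map_smul_eq_mul, Real.norm_eq_abs, mul_assoc]

lemma projExtReps_smul {k : ℕ} {c : ℝ} (hc : c ≠ 0) (h : MvPolynomial Ω ℝ) :
    projExtReps ρ (k + 1) (c • h) = |c| • projExtReps ρ (k + 1) h := by
  ext r
  constructor
  · intro hr
    have hr' := smul_mem_projExtReps c⁻¹ hr
    rw [inv_smul_smul₀ hc] at hr'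
    refine ⟨_, hr', ?_⟩
    simp [abs_inv, hc]
  · rintro ⟨r, hr, rfl⟩
    exact smul_mem_projExtReps c hr

lemma projExtReps_monomial_one_nonempty (d : Ω →₀ ℕ) :
    (projExtReps ρ d.degree (monomial d (1 : ℝ))).Nonempty := by
  induction d using Finsupp.induction_linear with
  | zero =>
    rw [map_zero]
    exact ⟨1, 1, fun _ => Fin.elim0, by simp, by simp⟩
  | add d e hd he =>
    obtain ⟨r, hr⟩ := hd
    obtain ⟨s, hs⟩ := he
    rw [map_add, ← mul_one (1 : ℝ), ← monomial_mul]
    exact ⟨_, mul_mem_projExtReps hr hs⟩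
  | single i n =>
    rw [Finsupp.degree_single, ← X_pow_eq_monomial]
    exact ⟨_, 1, fun _ _ => ⟨X i, X_mem_Vars i⟩, by simp, rfl⟩

lemma projExtReps_nonempty {k : ℕ} {h : MvPolynomial Ω ℝ} (hk : k ≠ 0)
    (hh : h.IsHomogeneous k) : (projExtReps ρ k h).Nonempty := by
  obtain ⟨k, rfl⟩ := Nat.exists_eq_succ_of_ne_zero hk
  rw [h.as_sum]
  refine Finset.sum_induction _ (fun q => (projExtReps ρ (k + 1) q).Nonempty)
    (fun _ _ ⟨r₁, hr₁⟩ ⟨r₂, hr₂⟩ => ⟨_, add_mem_projExtReps hr₁ hr₂⟩)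
    ⟨0, zero_mem_projExtReps _⟩ fun d hd => ?_
  have hdeg : d.degree = k + 1 := by
    rw [Finsupp.degree_eq_weight_one]
    exact hh (mem_support_iff.mp hd)
  obtain ⟨r, hr⟩ := projExtReps_monomial_one_nonempty (ρ := ρ) d
  rw [hdeg] at hr
  rw [← mul_one (coeff d h), ← smul_eq_mul, ← smul_monomial]
  exact ⟨_, smul_mem_projExtReps _ hr⟩

end projExtReps

section projExtHomog

variable {Ω : Type*} {ρ : Seminorm ℝ ↥(Vars Ω)}

lemma projExtHomog_nonneg (k : ℕ) (h : MvPolynomial Ω ℝ) : 0 ≤ projExtHomog ρ k h :=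
  Real.sInf_nonneg fun _ => nonneg_of_mem_projExtReps

lemma projExtHomog_le_of_mem {k : ℕ} {h : MvPolynomial Ω ℝ} {r : ℝ}
    (hr : r ∈ projExtReps ρ k h) : projExtHomog ρ k h ≤ r :=
  csInf_le (bddBelow_projExtReps k h) hr

@[simp]
lemma projExtHomog_zero (k : ℕ) : projExtHomog ρ k (0 : MvPolynomial Ω ℝ) = 0 :=
  (projExtHomog_le_of_mem (zero_mem_projExtReps k)).antisymm (projExtHomog_nonneg k 0)

lemma projExtHomog_smul {k : ℕ} (hk : k ≠ 0) (c : ℝ) (h : MvPolynomial Ω ℝ) :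
    projExtHomog ρ k (c • h) = |c| * projExtHomog ρ k h := by
  obtain ⟨k, rfl⟩ := Nat.exists_eq_succ_of_ne_zero hk
  rcases eq_or_ne c 0 with rfl | hc
  · simp
  · rw [projExtHomog_eq_sInf, projExtReps_smul hc, Real.sInf_smul_of_nonneg (abs_nonneg c)]
    rfl

lemma projExtHomog_add_le {k : ℕ} {h₁ h₂ : MvPolynomial Ω ℝ} (hk : k ≠ 0)
    (hh₁ : h₁.IsHomogeneous k) (hh₂ : h₂.IsHomogeneous k) :
    projExtHomog ρ k (h₁ + h₂) ≤ projExtHomog ρ k h₁ + projExtHomog ρ k h₂ := by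
  have hne₁ := projExtReps_nonempty (ρ := ρ) hk hh₁
  have hne₂ := projExtReps_nonempty (ρ := ρ) hk hh₂
  calc projExtHomog ρ k (h₁ + h₂) ≤ sInf (projExtReps ρ k h₁ + projExtReps ρ k h₂) :=
        csInf_le_csInf (bddBelow_projExtReps k _) (hne₁.add hne₂)
          (Set.add_subset_iff.2 fun _ hr₁ _ hr₂ => add_mem_projExtReps hr₁ hr₂)
    _ = projExtHomog ρ k h₁ + projExtHomog ρ k h₂ :=
        csInf_add hne₁ (bddBelow_projExtReps k _) hne₂ (bddBelow_projExtReps k _)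

lemma projExtHomog_mul_le {k l : ℕ} {h₁ h₂ : MvPolynomial Ω ℝ} (hk : k ≠ 0) (hl : l ≠ 0)
    (hh₁ : h₁.IsHomogeneous k) (hh₂ : h₂.IsHomogeneous l) :
    projExtHomog ρ (k + l) (h₁ * h₂) ≤ projExtHomog ρ k h₁ * projExtHomog ρ l h₂ :=
  Real.le_sInf_mul_sInf (projExtReps_nonempty hk hh₁) (projExtReps_nonempty hl hh₂)
    (fun _ => nonneg_of_mem_projExtReps) (fun _ => nonneg_of_mem_projExtReps)
    fun _ hr₁ _ hr₂ => projExtHomog_le_of_mem (mul_mem_projExtReps hr₁ hr₂)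

lemma projExtHomog_one_coe (v : ↥(Vars Ω)) : projExtHomog ρ 1 (v : MvPolynomial Ω ℝ) = ρ v := by
  refine le_antisymm (projExtHomog_le_of_mem ⟨1, fun _ _ => v, by simp, by simp⟩) ?_
  refine le_csInf ⟨ρ v, 1, fun _ _ => v, by simp, by simp⟩ ?_
  rintro r ⟨N, f, hf, rfl⟩
  have hv : v = ∑ i, f i 0 := Subtype.ext (by simpa using hf)
  calc ρ v ≤ ∑ i, ρ (f i 0) := hv ▸ Finset.le_sum_of_subadditive ρ (map_zero ρ).le
          (map_add_le_add ρ) _ _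
    _ = ∑ i, ∏ j, ρ (f i j) := by simp

end projExtHomog

section projExt

variable {Ω : Type*} (ρ : Seminorm ℝ ↥(Vars Ω))

lemma projExt_eq_of_totalDegree_le {M : ℕ} {h : MvPolynomial Ω ℝ} (hM : h.totalDegree ≤ M) :
    projExt ρ h = |coeff 0 h| +
      ∑ k ∈ Finset.Icc 1 M, projExtHomog ρ k (homogeneousComponent k h) := by
  rw [projExt]
  congr 1
  refine Finset.sum_subset (Finset.Icc_subset_Icc_right hM) fun k hk hnk => ?_
  simp only [Finset.mem_Icc] at hk hnk
  rw [homogeneousComponent_eq_zero _ _ (by omega), projExtHomog_zero]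

lemma projExt_C (a : ℝ) : projExt ρ (C a : MvPolynomial Ω ℝ) = |a| := by
  simp [projExt]

lemma projExt_of_isHomogeneous {k : ℕ} {h : MvPolynomial Ω ℝ} (hk : k ≠ 0)
    (hh : h.IsHomogeneous k) : projExt ρ h = projExtHomog ρ k h := by
  have hc0 : coeff 0 h = 0 := hh.coeff_eq_zero (by simpa using hk.symm)
  rw [projExt_eq_of_totalDegree_le ρ hh.totalDegree_le, hc0, abs_zero, zero_add,
    Finset.sum_eq_single_of_mem k (by simp [Nat.one_le_iff_ne_zero, hk])]
  · rw [homogeneousComponent_of_mem hh, if_pos rfl]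
  · intro m _ hm
    rw [homogeneousComponent_of_mem hh, if_neg hm, projExtHomog_zero]

lemma projExt_smul (c : ℝ) (h : MvPolynomial Ω ℝ) :
    projExt ρ (c • h) = |c| * projExt ρ h := by
  rw [projExt_eq_of_totalDegree_le ρ (totalDegree_smul_le c h), projExt, mul_add,
    Finset.mul_sum, coeff_smul, smul_eq_mul, abs_mul]
  congr 1
  refine Finset.sum_congr rfl fun k hk => ?_
  rw [map_smul, projExtHomog_smul (by simp at hk; omega)]

lemma projExt_add_le (f g : MvPolynomial Ω ℝ) :
    projExt ρ (f + g) ≤ projExt ρ f + projExt ρ g := by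
  have hf := le_max_left f.totalDegree g.totalDegree
  have hg := le_max_right f.totalDegree g.totalDegree
  rw [projExt_eq_of_totalDegree_le ρ (totalDegree_add f g), projExt_eq_of_totalDegree_le ρ hf,
    projExt_eq_of_totalDegree_le ρ hg, add_add_add_comm, ← Finset.sum_add_distrib]
  refine add_le_add ((congrArg abs (coeff_add 0 f g)).trans_le (abs_add_le _ _))
    (Finset.sum_le_sum fun k hk => ?_)
  rw [map_add]
  exact projExtHomog_add_le (by simp at hk; omega) (homogeneousComponent_isHomogeneous k f)
    (homogeneousComponent_isHomogeneous k g)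

lemma projExt_sum_le {ι : Type*} (s : Finset ι) (F : ι → MvPolynomial Ω ℝ) :
    projExt ρ (∑ i ∈ s, F i) ≤ ∑ i ∈ s, projExt ρ (F i) :=
  Finset.le_sum_of_subadditive (projExt ρ) (by simp [projExt]) (projExt_add_le ρ) s F

lemma sum_projExt_homogeneousComponent (h : MvPolynomial Ω ℝ) :
    ∑ k ∈ Finset.range (h.totalDegree + 1), projExt ρ (homogeneousComponent k h) = projExt ρ h := by
  rw [Finset.range_eq_Ico, Finset.sum_eq_sum_Ico_succ_bot (Nat.succ_pos _),
    homogeneousComponent_zero, projExt_C, projExt]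
  congr 1
  exact Finset.sum_congr rfl fun k hk => projExt_of_isHomogeneous ρ
    (by simp at hk; omega) (homogeneousComponent_isHomogeneous k h)

lemma projExt_mul_le_of_isHomogeneous {k l : ℕ} {f g : MvPolynomial Ω ℝ}
    (hf : f.IsHomogeneous k) (hg : g.IsHomogeneous l) :
    projExt ρ (f * g) ≤ projExt ρ f * projExt ρ g := by
  rcases eq_or_ne k 0 with rfl | hk
  · rw [totalDegree_eq_zero_iff_eq_C.1 ((totalDegree_zero_iff_isHomogeneous Ω).2 hf),
      ← smul_eq_C_mul, projExt_smul, projExt_C]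
  rcases eq_or_ne l 0 with rfl | hl
  · rw [totalDegree_eq_zero_iff_eq_C.1 ((totalDegree_zero_iff_isHomogeneous Ω).2 hg), mul_comm,
      ← smul_eq_C_mul, projExt_smul, projExt_C, mul_comm]
  rw [projExt_of_isHomogeneous ρ (by omega) (hf.mul hg), projExt_of_isHomogeneous ρ hk hf,
    projExt_of_isHomogeneous ρ hl hg]
  exact projExtHomog_mul_le hk hl hf hg

lemma projExt_mul_le (f g : MvPolynomial Ω ℝ) :
    projExt ρ (f * g) ≤ projExt ρ f * projExt ρ g := by
  conv_lhs => rw [← sum_homogeneousComponent f, ← sum_homogeneousComponent g, Finset.sum_mul_sum]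
  calc _ ≤ ∑ k ∈ Finset.range (f.totalDegree + 1), ∑ l ∈ Finset.range (g.totalDegree + 1),
        projExt ρ (homogeneousComponent k f * homogeneousComponent l g) :=
        (projExt_sum_le ρ _ _).trans (Finset.sum_le_sum fun k _ => projExt_sum_le ρ _ _)
    _ ≤ ∑ k ∈ Finset.range (f.totalDegree + 1), ∑ l ∈ Finset.range (g.totalDegree + 1),
        projExt ρ (homogeneousComponent k f) * projExt ρ (homogeneousComponent l g) :=
        Finset.sum_le_sum fun k _ => Finset.sum_le_sum fun l _ =>
          projExt_mul_le_of_isHomogeneous ρ (homogeneousComponent_isHomogeneous k f)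
            (homogeneousComponent_isHomogeneous l g)
    _ = projExt ρ f * projExt ρ g := by
        rw [← Finset.sum_mul_sum, sum_projExt_homogeneousComponent,
          sum_projExt_homogeneousComponent]

lemma projExt_coe (v : ↥(Vars Ω)) : projExt ρ (v : MvPolynomial Ω ℝ) = ρ v := by
  have hv : (v : MvPolynomial Ω ℝ).IsHomogeneous 1 := by
    simpa [Vars, ← homogeneousSubmodule_one_eq_span_X] using v.2
  rw [projExt_of_isHomogeneous ρ one_ne_zero hv, projExtHomog_one_coe]

end projExt

/-- **The projective extension is a submultiplicative seminorm extending `ρ`.**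
For any seminorm `ρ` on the span `V` of the variables of `A = ℝ[x_i : i ∈ Ω]`, the
projective extension `ρ̄` is absolutely homogeneous, subadditive (hence a seminorm on
`A`), submultiplicative, and restricts to `ρ` on `V`. -/
theorem projExt_submult_seminorm (Ω : Type*) (ρ : Seminorm ℝ ↥(Vars Ω)) :
    (∀ (c : ℝ) (h : MvPolynomial Ω ℝ), projExt ρ (c • h) = |c| * projExt ρ h) ∧
      (∀ f g : MvPolynomial Ω ℝ, projExt ρ (f + g) ≤ projExt ρ f + projExt ρ g) ∧
      (∀ f g : MvPolynomial Ω ℝ, projExt ρ (f * g) ≤ projExt ρ f * projExt ρ g) ∧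
      (∀ v : ↥(Vars Ω), projExt ρ (v : MvPolynomial Ω ℝ) = ρ v) :=
  ⟨projExt_smul ρ, projExt_add_le ρ, projExt_mul_le ρ, projExt_coe ρ⟩
end
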